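/- For all integers k ≥ 1 and i ≥ 0, with j = 1 + 3i, the following identity holds in ℚ (equivalently in ℤ after multiplying through by 3): F_{k+2} + (j − 5) F_{k+1} + (j − 6) F_k = 3 h_{2k+2} + 3(i − 2) h_{2k+1}. (In the paper's notation this says d_k(i) = h_{2k+2} + (i−2) h_{2k+1}, where 3 d_k(i) = p_k + q_k with p_k = F_{k+2} + (j−6) F_{k+1} and q_k = F_{k+1} + (j−6) F_k the numerator and denominator of b_k(i) = [6;(1,5)^{×(k−1)},1,j].) -/

import Mathlib

/-- The Lucas numbers `ℓ_k = f_{k-1} + f_{k+1}` (for `k ≥ 1`). -/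
def luc (k : ℕ) : ℕ := Nat.fib (k - 1) + Nat.fib (k + 1)

/-- `F_k = f_{4k}/3`. -/
def Fq (k : ℕ) : ℚ := (Nat.fib (4 * k) : ℚ) / 3

/-! Multiplying by 3, the identity at `n = 4k` is the combination `(A) + 3 (i - 2) (B)` of
`(A) f_{n+8} + f_n = 7 f_{n+4}` and `(B) f_{n+4} + f_n = 3 f_{n+2}`. -/

theorem Nat.fib_add_four_add_fib (n : ℕ) : fib (n + 4) + fib n = 3 * fib (n + 2) := by
  have h2 : fib (n + 2) = fib n + fib (n + 1) := fib_add_two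
  have h3 : fib (n + 3) = fib (n + 1) + fib (n + 2) := fib_add_two
  have h4 : fib (n + 4) = fib (n + 2) + fib (n + 3) := fib_add_two
  omega

theorem Nat.fib_add_eight_add_fib (n : ℕ) : fib (n + 8) + fib n = 7 * fib (n + 4) := by
  have h0 := fib_add_four_add_fib n
  have h2 : fib (n + 6) + fib (n + 2) = 3 * fib (n + 4) := fib_add_four_add_fib (n + 2)
  have h4 : fib (n + 8) + fib (n + 4) = 3 * fib (n + 6) := fib_add_four_add_fib (n + 4)
  omega

theorem stmt_19_general (k i j : ℕ) (hj : j = 1 + 3 * i) :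
    Fq (k + 2) + ((j : ℚ) - 5) * Fq (k + 1) + ((j : ℚ) - 6) * Fq k
      = 3 * (Nat.fib (4 * k + 4) : ℚ) + 3 * ((i : ℚ) - 2) * (Nat.fib (4 * k + 2) : ℚ) := by
  subst hj
  have hA : (Nat.fib (4 * k + 8) : ℚ) + Nat.fib (4 * k) = 7 * Nat.fib (4 * k + 4) := by
    exact_mod_cast Nat.fib_add_eight_add_fib (4 * k)
  have hB : (Nat.fib (4 * k + 4) : ℚ) + Nat.fib (4 * k) = 3 * Nat.fib (4 * k + 2) := by
    exact_mod_cast Nat.fib_add_four_add_fib (4 * k)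
  simp only [Fq, show 4 * (k + 2) = 4 * k + 8 by ring, show 4 * (k + 1) = 4 * k + 4 by ring]
  push_cast
  linear_combination hA / 3 + ((i : ℚ) - 2) * hB

/-- **Lemma 4.19 (le:dkj).** For all `k ≥ 1`, `i ≥ 0`, and `j = 1 + 3i`:
`F_{k+2} + (j−5)F_{k+1} + (j−6)F_k = 3h_{2k+2} + 3(i−2)h_{2k+1}`, where
`h_n = f_{2n}` denotes the even-index Fibonacci numbers (so `h_{2k+2} = f_{4k+4}`
and `h_{2k+1} = f_{4k+2}`).  This says `d_k(i) = h_{2k+2} + (i−2)h_{2k+1}`. -/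
theorem stmt_19 (k i j : ℕ) (hk : 1 ≤ k) (hj : j = 1 + 3 * i) :
    Fq (k + 2) + ((j : ℚ) - 5) * Fq (k + 1) + ((j : ℚ) - 6) * Fq k
      = 3 * (Nat.fib (4 * k + 4) : ℚ) + 3 * ((i : ℚ) - 2) * (Nat.fib (4 * k + 2) : ℚ) :=
  stmt_19_general k i j hj
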